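/- arXiv:quant-ph/0403073 — 7 statements merged into one kernel-verified Lean document; each statement's English description precedes it below -/
import Mathlib

section
/- Let a₁,a₂ be orthonormal vectors in ℂ^d, b₁,b₂ orthonormal vectors in ℂ^d, c₁,c₂ ∈ ℂ, and let ψ : Fin d × Fin d → ℂ be the Schmidt rank ≤ 2 vector ψ(i,k) = c₁·a₁(i)·b₁(k) + c₂·a₂(i)·b₂(k). Let V be the d×d matrix V_{k,i} = c₁·b₁(k)·a₁(i) + c₂·b₂(k)·a₂(i) (a matrix of rank at most 2), and define the map Λ(X) = (V·X·V†)ᵀ. Then (|ψ⟩⟨ψ|)^{T_B} = d·(1⊗Λ)(P₊), i.e. the Jamiołkowski operator of the two-decomposable map Λ is exactly the distillation witness |ψ⟩⟨ψ|^{T_B}. -/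
open Matrix Kronecker BigOperators
open scoped ComplexOrder

noncomputable section

/-- `d × d` complex matrices. -/
abbrev Mat (d : ℕ) := Matrix (Fin d) (Fin d) ℂ

/-- Matrices on `ℂ^d ⊗ ℂ^d`, indexed by `Fin d × Fin d`. -/
abbrev Mat2 (d : ℕ) := Matrix (Fin d × Fin d) (Fin d × Fin d) ℂ

/-- Partial transpose on Bob's system: `(M^{T_B})_{(i,k),(j,l)} = M_{(i,l),(j,k)}`. -/
def ptB {d : ℕ} (M : Mat2 d) : Mat2 d :=
  Matrix.of fun p q => M (p.1, q.2) (q.1, p.2)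

/-- Schmidt rank of a vector `ψ : Fin d × Fin d → ℂ`: the rank of the `d × d`
matrix with `(i,j)` entry `ψ (i,j)`. -/
def schmidtRank {d : ℕ} (ψ : Fin d × Fin d → ℂ) : ℕ :=
  (Matrix.of fun i j => ψ (i, j) : Mat d).rank

/-- A state: positive semidefinite with trace one. -/
def IsState {d : ℕ} (ρ : Mat2 d) : Prop := ρ.PosSemidef ∧ ρ.trace = 1

/-- One-distillability: some Schmidt-rank-≤2 vector has negative expectation on `ρ^{T_B}`. -/
def OneDistillable {d : ℕ} (ρ : Mat2 d) : Prop :=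
  ∃ ψ : Fin d × Fin d → ℂ, schmidtRank ψ ≤ 2 ∧
    (star ψ ⬝ᵥ (ptB ρ).mulVec ψ).re < 0

/-- The rank-one matrix `|ψ⟩⟨ψ|`, with entries `ψ x * conj (ψ y)`. -/
def outer {d : ℕ} (ψ : Fin d × Fin d → ℂ) : Mat2 d :=
  Matrix.vecMulVec ψ (star ψ)

/-- The maximally entangled projector `P₊`, `(P₊)_{(i,k),(j,l)} = (1/d)·δ_{ik}·δ_{jl}`. -/
def Pplus (d : ℕ) : Mat2 d :=
  Matrix.of fun p q =>
    ((if p.1 = p.2 then (1 : ℂ) else 0) * (if q.1 = q.2 then (1 : ℂ) else 0)) / d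

/-- The flip operator `V_{(i,k),(j,l)} = δ_{il}·δ_{jk}`. -/
def flipOp (d : ℕ) : Mat2 d :=
  Matrix.of fun p q => if p.1 = q.2 ∧ q.1 = p.2 then (1 : ℂ) else 0

/-- The operator `Z = Σ_i |ii⟩⟨ii|`, `Z_{(i,k),(j,l)} = δ_{ik}·δ_{jl}·δ_{ij}`. -/
def Zop (d : ℕ) : Mat2 d :=
  Matrix.of fun p q => if p.1 = p.2 ∧ q.1 = q.2 ∧ p.1 = q.1 then (1 : ℂ) else 0

/-- Partial trace over Alice: `(Tr_A M)_{k,l} = Σ_i M_{(i,k),(i,l)}`. -/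
def trA {d : ℕ} (M : Mat2 d) : Mat d :=
  Matrix.of fun k l => ∑ i, M (i, k) (i, l)

/-- Alice's reduced state: `(ρ_A)_{i,j} = Σ_k ρ_{(i,k),(j,k)}`. -/
def redA {d : ℕ} (ρ : Mat2 d) : Mat d :=
  Matrix.of fun i j => ∑ k, ρ (i, k) (j, k)

/-- Bob's reduced state: `(ρ_B)_{k,l} = Σ_i ρ_{(i,k),(i,l)}`. -/
def redB {d : ℕ} (ρ : Mat2 d) : Mat d := trA ρ

/-- `(1 ⊗ Λ)(M)`, acting with `Λ` on Bob's blocks. -/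
def idTensor {d : ℕ} (Λ : Mat d → Mat d) (M : Mat2 d) : Mat2 d :=
  Matrix.of fun p q => Λ (Matrix.of fun k l => M (p.1, k) (q.1, l)) p.2 q.2

/-- `(Λ ⊗ 1)(M)`, acting with `Λ` on Alice's blocks. -/
def tensorId {d : ℕ} (Λ : Mat d → Mat d) (M : Mat2 d) : Mat2 d :=
  Matrix.of fun p q => Λ (Matrix.of fun i j => M (i, p.2) (j, q.2)) p.1 q.1

/-- `(1_k ⊗ Λ)(M)` for `M` indexed by `Fin k × Fin d`. -/
def idTensorK {d : ℕ} (k : ℕ) (Λ : Mat d → Mat d)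
    (M : Matrix (Fin k × Fin d) (Fin k × Fin d) ℂ) :
    Matrix (Fin k × Fin d) (Fin k × Fin d) ℂ :=
  Matrix.of fun p q => Λ (Matrix.of fun m n => M (p.1, m) (q.1, n)) p.2 q.2

/-- Two-decomposable maps: `Λ(X) = Σᵢ Vᵢ · Xᵀ · Vᵢ†` with each `Vᵢ` of rank at most 2. -/
def TwoDecomposable {d : ℕ} (Λ : Mat d → Mat d) : Prop :=
  ∃ (n : ℕ) (V : Fin n → Mat d), (∀ i, (V i).rank ≤ 2) ∧
    ∀ X : Mat d, Λ X = ∑ i, V i * Xᵀ * (V i)ᴴ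

/-- The diagonal part of a matrix (off-diagonal entries set to zero). -/
def diagPart {d : ℕ} (X : Mat d) : Mat d := Matrix.diagonal fun i => X i i

/-! Both sides are the Choi matrix `Σᵢⱼ |i⟩⟨j| ⊗ Λ(|i⟩⟨j|)` of `Λ X = (V X V†)ᵀ`: the `(i, j)` block
of `d · P₊` is `|i⟩⟨j|`, and the `(k, l)` entry of `(V |i⟩⟨j| V†)ᵀ` is `V l i · conj (V k j)`,
which is `ψ (i, l) · conj (ψ (j, k))`, the `((i, k), (j, l))` entry of `|ψ⟩⟨ψ|^{T_B}`. -/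

def choiMatrix {d : ℕ} (Λ : Mat d → Mat d) : Mat2 d :=
  Matrix.of fun p q => Λ (Matrix.single p.1 q.1 1) p.2 q.2

lemma Pplus_block {d : ℕ} (i j : Fin d) :
    (Matrix.of fun k l => Pplus d (i, k) (j, l)) = (d : ℂ)⁻¹ • Matrix.single i j 1 := by
  ext k l
  by_cases hik : i = k <;> by_cases hjl : j = l <;> simp [Pplus, hik, hjl, div_eq_inv_mul]

lemma smul_idTensor_Pplus {d : ℕ} (hd : (d : ℂ) ≠ 0) {Λ : Mat d → Mat d}
    (hΛ : ∀ (c : ℂ) (X : Mat d), Λ (c • X) = c • Λ X) :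
    (d : ℂ) • idTensor Λ (Pplus d) = choiMatrix Λ := by
  ext p q
  simp only [idTensor, choiMatrix, Pplus_block, hΛ, Matrix.of_apply, Matrix.smul_apply, smul_eq_mul]
  field_simp

lemma conj_mul_single_mul_conjTranspose_apply {d : ℕ} (V : Mat d) (i j k l : Fin d) :
    (V * Matrix.single i j 1 * Vᴴ : Mat d) k l = V k i * star (V l j) := by
  simp [Matrix.mul_apply, Matrix.single_apply, ite_and]

lemma ptB_outer_eq_choiMatrix {d : ℕ} (ψ : Fin d × Fin d → ℂ) (V : Mat d)
    (hψV : ∀ i k, ψ (i, k) = V k i) :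
    ptB (outer ψ) = choiMatrix fun X => (V * X * Vᴴ)ᵀ := by
  ext ⟨i, k⟩ ⟨j, l⟩
  simp [ptB, outer, choiMatrix, Matrix.vecMulVec_apply, conj_mul_single_mul_conjTranspose_apply, hψV]

theorem witness_of_rank_two_map_general (d : ℕ) (hd : 2 ≤ d)
    (a₁ a₂ b₁ b₂ : Fin d → ℂ)
    (c₁ c₂ : ℂ) (ψ : Fin d × Fin d → ℂ)
    (hψ : ψ = fun p => c₁ * a₁ p.1 * b₁ p.2 + c₂ * a₂ p.1 * b₂ p.2)
    (V : Mat d)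
    (hV : V = Matrix.of fun k i => c₁ * b₁ k * a₁ i + c₂ * b₂ k * a₂ i) :
    ptB (outer ψ) = (d : ℂ) • idTensor (fun X => (V * X * Vᴴ)ᵀ) (Pplus d) := by
  have hd₀ : (d : ℂ) ≠ 0 := Nat.cast_ne_zero.mpr (by omega)
  have hψV : ∀ i k, ψ (i, k) = V k i := fun i k => by
    simp only [hψ, hV, Matrix.of_apply]
    ring
  rw [smul_idTensor_Pplus hd₀ fun c X => by simp, ptB_outer_eq_choiMatrix ψ V hψV]

/-- the Jamiołkowski operator of `Λ(X) = (V·X·V†)ᵀ` with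
`V = c₁|b₁⟩⟨a₁| + c₂|b₂⟩⟨a₂|` is the witness `|ψ⟩⟨ψ|^{T_B}`. -/
theorem witness_of_rank_two_map (d : ℕ) (hd : 2 ≤ d)
    (a₁ a₂ b₁ b₂ : Fin d → ℂ)
    (ha₁ : star a₁ ⬝ᵥ a₁ = 1) (ha₂ : star a₂ ⬝ᵥ a₂ = 1) (ha₁₂ : star a₁ ⬝ᵥ a₂ = 0)
    (hb₁ : star b₁ ⬝ᵥ b₁ = 1) (hb₂ : star b₂ ⬝ᵥ b₂ = 1) (hb₁₂ : star b₁ ⬝ᵥ b₂ = 0)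
    (c₁ c₂ : ℂ) (ψ : Fin d × Fin d → ℂ)
    (hψ : ψ = fun p => c₁ * a₁ p.1 * b₁ p.2 + c₂ * a₂ p.1 * b₂ p.2)
    (V : Mat d)
    (hV : V = Matrix.of fun k i => c₁ * b₁ k * a₁ i + c₂ * b₂ k * a₂ i) :
    ptB (outer ψ) = (d : ℂ) • idTensor (fun X => (V * X * Vᴴ)ᵀ) (Pplus d) :=
  witness_of_rank_two_map_general d hd a₁ a₂ b₁ b₂ c₁ c₂ ψ hψ V hV
end
end

section
/- Main Theorem: a state ρ on ℂ^d ⊗ ℂ^d is one-undistillable if and only if (1⊗Λ)(ρ) is positive semidefinite for every two-decomposable map Λ on d×d complex matrices. -/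
/-!
For `Λ X = V * Xᵀ * Vᴴ` one has `(1 ⊗ Λ)(ρ) = (1 ⊗ V) ρ^{T_B} (1 ⊗ V)ᴴ`, so the quadratic form
of `(1 ⊗ Λ)(ρ)` at `φ` is that of `ρ^{T_B}` at `ψ = (1 ⊗ V)ᴴ φ`. The Schmidt matrix of `ψ` is
that of `φ` times the entrywise conjugate of `V`, so `ψ` has Schmidt rank at most `rank V ≤ 2`.
Conversely every `ψ` arises this way, from the unnormalised maximally entangled vector
`φ = Σᵢ |ii⟩` and `V` the conjugate of the Schmidt matrix of `ψ`. A two-decomposable map is a sum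
of such `Λ`, and sums of positive semidefinite matrices are positive semidefinite.
-/

open Matrix Kronecker BigOperators
open scoped ComplexOrder

noncomputable section

namespace Matrix.IsHermitian

lemma ptB {d : ℕ} {ρ : Mat2 d} (hρ : ρ.IsHermitian) : (ptB ρ).IsHermitian := by
  ext p q
  simp only [_root_.ptB, conjTranspose_apply, of_apply]
  exact congrFun (congrFun hρ (p.1, q.2)) (q.1, p.2)

lemma zero_le_star_dotProduct_mulVec_iff_re {n : Type*} [Fintype n] {H : Matrix n n ℂ}
    (hH : H.IsHermitian) (x : n → ℂ) : 0 ≤ star x ⬝ᵥ H *ᵥ x ↔ 0 ≤ (star x ⬝ᵥ H *ᵥ x).re := by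
  have him : (star x ⬝ᵥ H *ᵥ x).im = 0 := hH.im_star_dotProduct_mulVec_self x
  rw [Complex.nonneg_iff, him]
  simp

end Matrix.IsHermitian

section
variable {d : ℕ}

lemma not_oneDistillable_iff {ρ : Mat2 d} (hρ : ρ.IsHermitian) :
    ¬ OneDistillable ρ ↔ ∀ ψ, schmidtRank ψ ≤ 2 → 0 ≤ star ψ ⬝ᵥ ptB ρ *ᵥ ψ := by
  simp only [OneDistillable, hρ.ptB.zero_le_star_dotProduct_mulVec_iff_re, not_exists, not_and,
    not_lt]

lemma idTensor_sum {ι : Type*} [Fintype ι] (Λ : ι → Mat d → Mat d) (M : Mat2 d) :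
    idTensor (fun X => ∑ i, Λ i X) M = ∑ i, idTensor (Λ i) M := by
  ext p q
  simp [idTensor, Matrix.sum_apply]

lemma idTensor_mul_transpose_mul_conjTranspose (V : Mat d) (M : Mat2 d) :
    idTensor (fun X => V * Xᵀ * Vᴴ) M = ((1 : Mat d) ⊗ₖ V) * ptB M * ((1 : Mat d) ⊗ₖ V)ᴴ := by
  ext ⟨i, k⟩ ⟨j, l⟩
  simp [idTensor, ptB, mul_apply, one_apply, Fintype.sum_prod_type, ite_mul,
    mul_ite, apply_ite (starRingEnd ℂ), Finset.sum_mul]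

lemma of_conjTranspose_kronecker_mulVec (V : Mat d) (φ : Fin d × Fin d → ℂ) :
    (of fun i j => (((1 : Mat d) ⊗ₖ V)ᴴ *ᵥ φ) (i, j))
      = (of fun i j => φ (i, j)) * Vᴴᵀ := by
  ext i j
  simp [mulVec, dotProduct, mul_apply, one_apply, Fintype.sum_prod_type,
    apply_ite (starRingEnd ℂ), mul_comm]

lemma schmidtRank_conjTranspose_kronecker_mulVec_le (V : Mat d) (φ : Fin d × Fin d → ℂ) :
    schmidtRank (((1 : Mat d) ⊗ₖ V)ᴴ *ᵥ φ) ≤ V.rank := by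
  rw [schmidtRank, of_conjTranspose_kronecker_mulVec]
  refine (rank_mul_le_right _ _).trans_eq ?_
  rw [rank_transpose, rank_conjTranspose]

lemma star_dotProduct_idTensor_mulVec (V : Mat d) (M : Mat2 d) (φ : Fin d × Fin d → ℂ) :
    star φ ⬝ᵥ idTensor (fun X => V * Xᵀ * Vᴴ) M *ᵥ φ
      = star (((1 : Mat d) ⊗ₖ V)ᴴ *ᵥ φ) ⬝ᵥ ptB M *ᵥ (((1 : Mat d) ⊗ₖ V)ᴴ *ᵥ φ) := by
  rw [idTensor_mul_transpose_mul_conjTranspose, star_mulVec, conjTranspose_conjTranspose,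
    ← dotProduct_mulVec, mulVec_mulVec, mulVec_mulVec]

lemma conjTranspose_kronecker_mulVec_maxEntangled (ψ : Fin d × Fin d → ℂ) :
    ((1 : Mat d) ⊗ₖ (of fun i j => ψ (i, j))ᴴᵀ)ᴴ
      *ᵥ (fun p => if p.1 = p.2 then 1 else 0) = ψ := by
  funext p
  have h := congrFun₂ (of_conjTranspose_kronecker_mulVec
    (of fun i j => ψ (i, j))ᴴᵀ (fun p => if p.1 = p.2 then 1 else 0)) p.1 p.2
  simpa [mul_apply] using h

lemma twoDecomposable_mul_transpose_mul_conjTranspose {V : Mat d} (hV : V.rank ≤ 2) :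
    TwoDecomposable (fun X => V * Xᵀ * Vᴴ) :=
  ⟨1, fun _ => V, fun _ => hV, fun X => by simp⟩

lemma posSemidef_idTensor_of_not_oneDistillable {ρ : Mat2 d} (hρ : ρ.IsHermitian)
    (hund : ¬ OneDistillable ρ) {V : Mat d} (hV : V.rank ≤ 2) :
    (idTensor (fun X => V * Xᵀ * Vᴴ) ρ).PosSemidef := by
  refine .of_dotProduct_mulVec_nonneg ?_ fun φ => ?_
  · rw [idTensor_mul_transpose_mul_conjTranspose]
    exact isHermitian_mul_mul_conjTranspose _ hρ.ptB
  · rw [star_dotProduct_idTensor_mulVec]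
    exact (not_oneDistillable_iff hρ).mp hund _
      ((schmidtRank_conjTranspose_kronecker_mulVec_le V φ).trans hV)

end

theorem oneUndistillable_iff_twoDecomposable_general (d : ℕ)
    (ρ : Mat2 d) (hρ : IsState ρ) :
    ¬ OneDistillable ρ ↔
      ∀ Λ : Mat d → Mat d, TwoDecomposable Λ → (idTensor Λ ρ).PosSemidef := by
  constructor
  · rintro hund Λ ⟨n, V, hV, hΛ⟩
    rw [funext hΛ, idTensor_sum]
    exact posSemidef_sum _ fun i _ => posSemidef_idTensor_of_not_oneDistillable hρ.1.1 hund (hV i)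
  · refine fun h => (not_oneDistillable_iff hρ.1.1).mpr fun ψ hψ => ?_
    have hV : (of fun i j => ψ (i, j))ᴴᵀ.rank ≤ 2 := by
      rwa [rank_transpose, rank_conjTranspose]
    have hpsd := h _ (twoDecomposable_mul_transpose_mul_conjTranspose hV)
    simpa only [star_dotProduct_idTensor_mulVec, conjTranspose_kronecker_mulVec_maxEntangled]
      using hpsd.dotProduct_mulVec_nonneg fun p => if p.1 = p.2 then 1 else 0

/-- Main Theorem: a state is one-undistillable iff
`(1⊗Λ)(ρ) ≥ 0` for every two-decomposable map `Λ`. -/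
theorem oneUndistillable_iff_twoDecomposable (d : ℕ) (hd : 2 ≤ d)
    (ρ : Mat2 d) (hρ : IsState ρ) :
    ¬ OneDistillable ρ ↔
      ∀ Λ : Mat d → Mat d, TwoDecomposable Λ → (idTensor Λ ρ).PosSemidef :=
  oneUndistillable_iff_twoDecomposable_general d ρ hρ
end
end

section
/- Dual criterion: if ρ is a state on ℂ^d ⊗ ℂ^d and Λ is a two-decomposable map such that (Λ⊗1)(ρ) is not positive semidefinite, then ρ is one-distillable. -/
open Matrix Kronecker BigOperators
open scoped ComplexOrder

noncomputable section

/-!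
Write `Λ X = Σᵥ Vᵥ Xᵀ Vᵥ†`. For every vector `φ`, reindexing the sums shows
`⟨φ, (Λ ⊗ 1)(ρ) φ⟩ = Σᵥ ⟨ψᵥ, ρ^{T_B} ψᵥ⟩` with `ψᵥ = (Vᵥᵀ ⊗ 1) φ̄`, whose Schmidt matrix
`Vᵥᵀ Φ̄` has rank at most `rank Vᵥ ≤ 2`. Each summand is real because `ρ^{T_B}` is Hermitian, so if
none of them were negative, every expectation of `(Λ ⊗ 1)(ρ)` would be a nonnegative real and
`(Λ ⊗ 1)(ρ)` would be positive semidefinite.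
-/

lemma Matrix.posSemidef_of_forall_nonneg_dotProduct_mulVec {n : Type*} [Fintype n]
    {M : Matrix n n ℂ} (hM : ∀ x, 0 ≤ star x ⬝ᵥ M *ᵥ x) : M.PosSemidef := by
  classical
  rw [← isPositive_toEuclideanLin_iff, LinearMap.isPositive_iff_complex]
  intro x
  obtain ⟨hre, him⟩ := Complex.nonneg_iff.mp (hM x.ofLp)
  simp only [EuclideanSpace.inner_eq_star_dotProduct, ofLp_toLpLin, toLin'_apply,
    dotProduct_star, dotProduct_comm (M *ᵥ _)]
  exact ⟨Complex.ext (by simp) (by simp [← him]), by simpa using hre⟩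

lemma ptB_isHermitian {d : ℕ} {ρ : Mat2 d} (hρ : ρ.IsHermitian) : (ptB ρ).IsHermitian := by
  ext p q
  exact hρ.apply (p.1, q.2) (q.1, p.2)

lemma tensorId_sum {d n : ℕ} (Λ : Fin n → Mat d → Mat d) (M : Mat2 d) :
    tensorId (fun X => ∑ v, Λ v X) M = ∑ v, tensorId (Λ v) M := by
  ext p q
  simp [tensorId, Matrix.sum_apply]

/-- The vector `(Vᵀ ⊗ 1) φ̄`. -/
def kronTransposeConj {d : ℕ} (V : Mat d) (φ : Fin d × Fin d → ℂ) : Fin d × Fin d → ℂ :=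
  fun p => ∑ i, V i p.1 * star (φ (i, p.2))

lemma schmidtRank_kronTransposeConj_le {d : ℕ} (V : Mat d) (φ : Fin d × Fin d → ℂ) :
    schmidtRank (kronTransposeConj V φ) ≤ V.rank := by
  have hschmidt : (Matrix.of fun a k => kronTransposeConj V φ (a, k) : Mat d)
      = Vᵀ * Matrix.of fun i k => star (φ (i, k)) := by
    ext a k
    simp [kronTransposeConj, Matrix.mul_apply]
  rw [schmidtRank, hschmidt, ← rank_transpose V]
  exact rank_mul_le_left _ _

lemma star_dotProduct_tensorId_mulVec_eq_ptB {d : ℕ} (V : Mat d) (ρ : Mat2 d)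
    (φ : Fin d × Fin d → ℂ) :
    star φ ⬝ᵥ tensorId (fun X => V * Xᵀ * Vᴴ) ρ *ᵥ φ
      = star (kronTransposeConj V φ) ⬝ᵥ ptB ρ *ᵥ kronTransposeConj V φ := by
  simp only [dotProduct, mulVec, kronTransposeConj, tensorId, ptB, Matrix.mul_apply,
    conjTranspose_apply, transpose_apply, of_apply, Pi.star_apply, star_sum, star_mul', star_star,
    Finset.sum_mul, Finset.mul_sum]
  simp only [← Fintype.sum_prod_type']
  let swap : (Fin d × Fin d) × (Fin d × Fin d) × Fin d × Fin d → _ :=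
    fun ⟨⟨i, k⟩, ⟨j, l⟩, a, b⟩ => ((a, l), (b, k), i, j)
  have hswap : Function.Involutive swap := fun _ => rfl
  exact Fintype.sum_equiv hswap.toPerm _ _ fun _ => by simp [swap]; ring

theorem dual_criterion_general (d : ℕ) (ρ : Mat2 d) (hρ : IsState ρ)
    (Λ : Mat d → Mat d) (hΛ : TwoDecomposable Λ)
    (h : ¬ (tensorId Λ ρ).PosSemidef) : OneDistillable ρ := by
  obtain ⟨n, V, hrank, hΛ⟩ := hΛ
  obtain rfl : Λ = fun X => ∑ v, V v * Xᵀ * (V v)ᴴ := funext hΛ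
  by_contra hundistillable
  refine h (posSemidef_of_forall_nonneg_dotProduct_mulVec fun φ => ?_)
  rw [tensorId_sum, sum_mulVec, dotProduct_sum]
  refine Finset.sum_nonneg fun v _ => ?_
  rw [star_dotProduct_tensorId_mulVec_eq_ptB]
  refine Complex.nonneg_iff.mpr ⟨not_lt.mp fun hneg => hundistillable ⟨_, ?_, hneg⟩,
    ((ptB_isHermitian hρ.1.1).im_star_dotProduct_mulVec_self _).symm⟩
  exact (schmidtRank_kronTransposeConj_le _ _).trans (hrank v)

/-- dual criterion: if `(Λ⊗1)(ρ)` is not positive semidefinite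
for a two-decomposable `Λ`, then `ρ` is one-distillable. -/
theorem dual_criterion (d : ℕ) (hd : 2 ≤ d) (ρ : Mat2 d) (hρ : IsState ρ)
    (Λ : Mat d → Mat d) (hΛ : TwoDecomposable Λ)
    (h : ¬ (tensorId Λ ρ).PosSemidef) : OneDistillable ρ :=
  dual_criterion_general d ρ hρ Λ hΛ h
end
end

section
/- Reduction criterion implies one-distillability: let ρ be a state on ℂ^d ⊗ ℂ^d with reduced states ρ_A = Tr_B ρ and ρ_B = Tr_A ρ. If I⊗ρ_B − ρ is not positive semidefinite, or if ρ_A⊗I − ρ is not positive semidefinite, then ρ is one-distillable. -/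
open Matrix Kronecker BigOperators
open scoped ComplexOrder

noncomputable section

/-!
If `⟪φ, (ρ_A ⊗ I - ρ) φ⟫ < 0`, let `Φ` be the coefficient matrix of `φ` and put
`ψᵢⱼ = (Φ eᵢ) ⊗ eⱼ - (Φ eⱼ) ⊗ eᵢ`. Each `ψᵢⱼ` has Schmidt rank at most two, and expanding the
partial transpose gives `∑ᵢⱼ ⟪ψᵢⱼ, ρ^{T_B} ψᵢⱼ⟫ = 2 ⟪φ, (ρ_A ⊗ I - ρ) φ⟫ < 0`, so some `ψᵢⱼ`
witnesses one-distillability. The case `I ⊗ ρ_B - ρ` is symmetric, with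
`ψᵢⱼ = eⱼ ⊗ (Φᴴ eᵢ) - eᵢ ⊗ (Φᴴ eⱼ)`.
-/

lemma Matrix.IsHermitian.kronecker {R l n : Type*} [CommMagma R] [StarMul R]
    {A : Matrix l l R} {B : Matrix n n R} (hA : A.IsHermitian) (hB : B.IsHermitian) :
    (A ⊗ₖ B).IsHermitian := by
  rw [IsHermitian, conjTranspose_kronecker, hA, hB]

lemma exists_re_dotProduct_mulVec_neg {n : Type*} [Fintype n] {M : Matrix n n ℂ}
    (hM : M.IsHermitian) (h : ¬ M.PosSemidef) : ∃ x, (star x ⬝ᵥ M *ᵥ x).re < 0 := by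
  by_contra! hx
  exact h <| .of_dotProduct_mulVec_nonneg hM fun x =>
    Complex.nonneg_iff.mpr ⟨hx x, by simpa using (hM.im_star_dotProduct_mulVec_self x).symm⟩

lemma sum_dotProduct_mulVec_sub_swap {R n ι : Type*} [CommRing R] [StarRing R] [Fintype n]
    [Fintype ι] (M : Matrix n n R) (x : ι → ι → n → R) :
    ∑ i, ∑ j, star (x i j - x j i) ⬝ᵥ M *ᵥ (x i j - x j i) =
      2 * (∑ i, ∑ j, star (x i j) ⬝ᵥ M *ᵥ x i j - ∑ i, ∑ j, star (x i j) ⬝ᵥ M *ᵥ x j i) := by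
  simp only [star_sub, mulVec_sub, dotProduct_sub, sub_dotProduct, Finset.sum_sub_distrib]
  rw [Finset.sum_comm (f := fun i j => star (x j i) ⬝ᵥ M *ᵥ x j i),
    Finset.sum_comm (f := fun i j => star (x j i) ⬝ᵥ M *ᵥ x i j)]
  ring

lemma Matrix.rank_le_two_of_row_eq_zero {R m n : Type*} [CommSemiring R] [StrongRankCondition R]
    [Fintype n] (A : Matrix m n R) (i j : m) (h : ∀ a, a ≠ i → a ≠ j → A a = 0) :
    A.rank ≤ 2 := by
  classical
  refine (A.rank_le_card_of_support_subset {i, j} fun a ha => ?_).trans Finset.card_le_two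
  by_contra hij
  simp only [Finset.coe_insert, Finset.coe_singleton, Set.mem_insert_iff,
    Set.mem_singleton_iff, not_or] at hij
  exact ha (h a hij.1 hij.2)

section

variable {d : ℕ}

lemma isHermitian_redA {ρ : Mat2 d} (hρ : ρ.IsHermitian) : (redA ρ).IsHermitian := by
  ext i j
  simp only [redA, conjTranspose_apply, of_apply, star_sum]
  exact Finset.sum_congr rfl fun k _ => hρ.apply _ _

lemma isHermitian_redB {ρ : Mat2 d} (hρ : ρ.IsHermitian) : (redB ρ).IsHermitian := by
  ext k l
  simp only [redB, trA, conjTranspose_apply, of_apply, star_sum]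
  exact Finset.sum_congr rfl fun i _ => hρ.apply _ _

/-- `colShift φ i j = (Φ eᵢ) ⊗ eⱼ`, where `Φ a b = φ (a, b)` is the coefficient matrix of `φ`. -/
def colShift (φ : Fin d × Fin d → ℂ) (i j : Fin d) : Fin d × Fin d → ℂ :=
  fun p => if p.2 = j then φ (p.1, i) else 0

/-- `conjRowShift φ i j = eⱼ ⊗ (Φᴴ eᵢ)`. -/
def conjRowShift (φ : Fin d × Fin d → ℂ) (i j : Fin d) : Fin d × Fin d → ℂ :=
  fun p => if p.1 = j then starRingEnd ℂ (φ (i, p.2)) else 0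

lemma sum_colShift_ptB_self (ρ : Mat2 d) (φ : Fin d × Fin d → ℂ) :
    ∑ i, ∑ j, star (colShift φ i j) ⬝ᵥ ptB ρ *ᵥ colShift φ i j =
      star φ ⬝ᵥ (redA ρ ⊗ₖ (1 : Mat d)) *ᵥ φ := by
  simp only [colShift, dotProduct, mulVec, ptB, redA, kroneckerMap_apply, one_apply, of_apply,
    Fintype.sum_prod_type, Pi.star_apply, RCLike.star_def, apply_ite (starRingEnd ℂ), map_zero,
    ite_mul, mul_ite, zero_mul, mul_zero, mul_one, Finset.sum_ite_eq', Finset.sum_ite_eq,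
    Finset.mem_univ, ↓reduceIte, Finset.sum_ite_irrel, Finset.sum_const_zero, Finset.mul_sum,
    Finset.sum_mul]
  rw [Finset.sum_congr rfl fun _ _ => Finset.sum_comm, Finset.sum_comm]
  exact Finset.sum_congr rfl fun _ _ => Finset.sum_congr rfl fun _ _ => Finset.sum_comm

lemma sum_colShift_ptB_swap (ρ : Mat2 d) (φ : Fin d × Fin d → ℂ) :
    ∑ i, ∑ j, star (colShift φ i j) ⬝ᵥ ptB ρ *ᵥ colShift φ j i = star φ ⬝ᵥ ρ *ᵥ φ := by
  simp only [colShift, dotProduct, mulVec, ptB, of_apply, Fintype.sum_prod_type, Pi.star_apply,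
    RCLike.star_def, apply_ite (starRingEnd ℂ), map_zero, ite_mul, mul_ite, zero_mul, mul_zero,
    Finset.sum_ite_eq', Finset.mem_univ, ↓reduceIte, Finset.sum_ite_irrel, Finset.sum_const_zero,
    Finset.mul_sum]
  rw [Finset.sum_congr rfl fun _ _ => Finset.sum_comm, Finset.sum_comm]
  exact Finset.sum_congr rfl fun _ _ => Finset.sum_congr rfl fun _ _ => Finset.sum_comm

lemma sum_conjRowShift_ptB_self (ρ : Mat2 d) (φ : Fin d × Fin d → ℂ) :
    ∑ i, ∑ j, star (conjRowShift φ i j) ⬝ᵥ ptB ρ *ᵥ conjRowShift φ i j =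
      star φ ⬝ᵥ ((1 : Mat d) ⊗ₖ redB ρ) *ᵥ φ := by
  simp only [conjRowShift, dotProduct, mulVec, ptB, redB, trA, kroneckerMap_apply, one_apply,
    of_apply, Fintype.sum_prod_type, Pi.star_apply, RCLike.star_def, apply_ite (starRingEnd ℂ),
    map_zero, Complex.conj_conj, ite_mul, mul_ite, zero_mul, mul_zero, one_mul,
    Finset.sum_ite_eq', Finset.sum_ite_eq, Finset.mem_univ, ↓reduceIte, Finset.sum_ite_irrel,
    Finset.sum_const_zero, Finset.mul_sum, Finset.sum_mul]
  refine Finset.sum_congr rfl fun _ _ => ?_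
  rw [Finset.sum_comm, Finset.sum_congr rfl fun _ _ => Finset.sum_comm, Finset.sum_comm]
  exact Finset.sum_congr rfl fun _ _ => Finset.sum_congr rfl fun _ _ =>
    Finset.sum_congr rfl fun _ _ => by ring

lemma sum_conjRowShift_ptB_swap (ρ : Mat2 d) (φ : Fin d × Fin d → ℂ) :
    ∑ i, ∑ j, star (conjRowShift φ i j) ⬝ᵥ ptB ρ *ᵥ conjRowShift φ j i = star φ ⬝ᵥ ρ *ᵥ φ := by
  simp only [conjRowShift, dotProduct, mulVec, ptB, of_apply, Fintype.sum_prod_type,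
    Pi.star_apply, RCLike.star_def, apply_ite (starRingEnd ℂ), map_zero, Complex.conj_conj,
    ite_mul, mul_ite, zero_mul, mul_zero, Finset.sum_ite_eq',
    Finset.mem_univ, ↓reduceIte, Finset.sum_ite_irrel, Finset.sum_const_zero, Finset.mul_sum]
  rw [Finset.sum_comm]
  refine Finset.sum_congr rfl fun _ _ => ?_
  rw [Finset.sum_congr rfl fun _ _ => Finset.sum_comm, Finset.sum_comm]
  exact Finset.sum_congr rfl fun _ _ => Finset.sum_congr rfl fun _ _ =>
    Finset.sum_congr rfl fun _ _ => by ring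

lemma schmidtRank_colShift_sub_le (φ : Fin d × Fin d → ℂ) (i j : Fin d) :
    schmidtRank (colShift φ i j - colShift φ j i) ≤ 2 := by
  rw [schmidtRank, ← rank_transpose]
  exact rank_le_two_of_row_eq_zero _ i j fun b hi hj => by ext a; simp [colShift, hi, hj]

lemma schmidtRank_conjRowShift_sub_le (φ : Fin d × Fin d → ℂ) (i j : Fin d) :
    schmidtRank (conjRowShift φ i j - conjRowShift φ j i) ≤ 2 :=
  rank_le_two_of_row_eq_zero _ i j fun a hi hj => by ext b; simp [conjRowShift, hi, hj]

lemma sum_colShift_sub_ptB (ρ : Mat2 d) (φ : Fin d × Fin d → ℂ) :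
    ∑ i, ∑ j, star (colShift φ i j - colShift φ j i) ⬝ᵥ
        ptB ρ *ᵥ (colShift φ i j - colShift φ j i) =
      2 * (star φ ⬝ᵥ (redA ρ ⊗ₖ (1 : Mat d) - ρ) *ᵥ φ) := by
  rw [sum_dotProduct_mulVec_sub_swap, sum_colShift_ptB_self, sum_colShift_ptB_swap, sub_mulVec,
    dotProduct_sub]

lemma sum_conjRowShift_sub_ptB (ρ : Mat2 d) (φ : Fin d × Fin d → ℂ) :
    ∑ i, ∑ j, star (conjRowShift φ i j - conjRowShift φ j i) ⬝ᵥ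
        ptB ρ *ᵥ (conjRowShift φ i j - conjRowShift φ j i) =
      2 * (star φ ⬝ᵥ ((1 : Mat d) ⊗ₖ redB ρ - ρ) *ᵥ φ) := by
  rw [sum_dotProduct_mulVec_sub_swap, sum_conjRowShift_ptB_self, sum_conjRowShift_ptB_swap,
    sub_mulVec, dotProduct_sub]

lemma oneDistillable_of_sum_re_neg {ι : Type*} [Fintype ι] {ρ : Mat2 d}
    (ψ : ι → Fin d × Fin d → ℂ) (hψ : ∀ k, schmidtRank (ψ k) ≤ 2)
    (hneg : (∑ k, star (ψ k) ⬝ᵥ ptB ρ *ᵥ ψ k).re < 0) : OneDistillable ρ := by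
  rw [Complex.re_sum, ← Finset.sum_const_zero] at hneg
  obtain ⟨k, -, hk⟩ := Finset.exists_lt_of_sum_lt hneg
  exact ⟨ψ k, hψ k, hk⟩

theorem oneDistillable_of_not_posSemidef_redA_kronecker_one_sub {ρ : Mat2 d}
    (hρ : ρ.IsHermitian) (h : ¬ (redA ρ ⊗ₖ (1 : Mat d) - ρ).PosSemidef) : OneDistillable ρ := by
  obtain ⟨φ, hφ⟩ := exists_re_dotProduct_mulVec_neg
    (((isHermitian_redA hρ).kronecker isHermitian_one).sub hρ) h
  refine oneDistillable_of_sum_re_neg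
    (fun k : Fin d × Fin d => colShift φ k.1 k.2 - colShift φ k.2 k.1)
    (fun k => schmidtRank_colShift_sub_le φ k.1 k.2) ?_
  rw [Fintype.sum_prod_type, sum_colShift_sub_ptB]
  simpa using mul_neg_of_pos_of_neg two_pos hφ

theorem oneDistillable_of_not_posSemidef_one_kronecker_redB_sub {ρ : Mat2 d}
    (hρ : ρ.IsHermitian) (h : ¬ ((1 : Mat d) ⊗ₖ redB ρ - ρ).PosSemidef) : OneDistillable ρ := by
  obtain ⟨φ, hφ⟩ := exists_re_dotProduct_mulVec_neg
    ((isHermitian_one.kronecker (isHermitian_redB hρ)).sub hρ) h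
  refine oneDistillable_of_sum_re_neg
    (fun k : Fin d × Fin d => conjRowShift φ k.1 k.2 - conjRowShift φ k.2 k.1)
    (fun k => schmidtRank_conjRowShift_sub_le φ k.1 k.2) ?_
  rw [Fintype.sum_prod_type, sum_conjRowShift_sub_ptB]
  simpa using mul_neg_of_pos_of_neg two_pos hφ

end

theorem reduction_criterion_implies_distillable_general (d : ℕ)
    (ρ : Mat2 d) (hρ : IsState ρ)
    (h : ¬ ((1 : Mat d) ⊗ₖ redB ρ - ρ).PosSemidef ∨
         ¬ (redA ρ ⊗ₖ (1 : Mat d) - ρ).PosSemidef) :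
    OneDistillable ρ :=
  h.elim (oneDistillable_of_not_posSemidef_one_kronecker_redB_sub hρ.1.isHermitian)
    (oneDistillable_of_not_posSemidef_redA_kronecker_one_sub hρ.1.isHermitian)

/-- violation of the reduction criterion implies one-distillability. -/
theorem reduction_criterion_implies_distillable (d : ℕ) (hd : 2 ≤ d)
    (ρ : Mat2 d) (hρ : IsState ρ)
    (h : ¬ ((1 : Mat d) ⊗ₖ redB ρ - ρ).PosSemidef ∨
         ¬ (redA ρ ⊗ₖ (1 : Mat d) - ρ).PosSemidef) :
    OneDistillable ρ :=
  reduction_criterion_implies_distillable_general d ρ hρ h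
end
end

section
/- DiVincenzo et al. criterion: let ρ be a state on ℂ^d ⊗ ℂ^d and let S be the linear map on d×d complex matrices defined by S(X)_{k,l} = d·Σ_{i,j} X_{i,j}·ρ_{(i,k),(j,l)} (the unique map with ρ = (1⊗S)(P₊)); set Λ(X) = (S(X))ᵀ. Then ρ is one-distillable if and only if Λ is not two-positive, i.e. if and only if there exists a positive semidefinite matrix M indexed by Fin 2 × Fin d such that (1₂⊗Λ)(M) is not positive semidefinite. -/
open Matrix Kronecker BigOperators
open scoped ComplexOrder

noncomputable section

/-!
A vector of Schmidt rank at most `k` is exactly a partial inner product `ψ = ⟨χ, x⟩_{ℂ^k}` of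
two vectors `χ, x ∈ ℂ^k ⊗ ℂ^d` (factor the `d × d` matrix of `ψ` through `ℂ^k`). For such `ψ`,
`⟨x, (1_k ⊗ Λ)(|χ⟩⟨χ|) x⟩ = d · ⟨ψ, ρ^{T_B} ψ⟩`. Every positive semidefinite matrix is a sum of
matrices `|χ⟩⟨χ|`, so `Λ` is `k`-positive exactly when `ρ^{T_B}` has nonnegative expectation on
all vectors of Schmidt rank at most `k`; the case `k = 2` is the theorem.
-/

theorem Matrix.exists_mul_eq_of_rank_le {K m n : Type*} [Field K] [Fintype n]
    {A : Matrix m n K} {r : ℕ} (h : A.rank ≤ r) :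
    ∃ (U : Matrix m (Fin r) K) (V : Matrix (Fin r) n K), U * V = A := by
  have := FiniteDimensional.span_of_finite K (Set.finite_range Aᵀ)
  obtain ⟨f, -, hf, -⟩ := Submodule.exists_fun_fin_finrank_span_eq K (Set.range Aᵀ)
  rw [rank_eq_finrank_span_cols] at h
  let g : Fin r → m → K := Function.extend (Fin.castLE h) f 0
  have hfg : Set.range f ⊆ Set.range g := by
    rintro _ ⟨i, rfl⟩
    exact ⟨Fin.castLE h i, (Fin.castLE_injective h).extend_apply f 0 i⟩
  have hcol (l : n) : ∃ c : Fin r → K, ∑ a, c a • g a = Aᵀ l :=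
    (Submodule.mem_span_range_iff_exists_fun K).mp <| Submodule.span_mono hfg <| by
      rw [hf]; exact Submodule.subset_span ⟨l, rfl⟩
  choose c hc using hcol
  refine ⟨Matrix.of fun i a => g a i, Matrix.of fun a l => c l a, ?_⟩
  ext i l
  simpa [Matrix.mul_apply, mul_comm] using congrFun (hc l) i

section

variable {d k : ℕ}

def partialInner (χ : Fin k × Fin d → ℂ) : Matrix (Fin d × Fin d) (Fin k × Fin d) ℂ :=
  (Matrix.of (Function.curry χ))ᴴ ⊗ₖ 1

theorem partialInner_mulVec_apply (χ x : Fin k × Fin d → ℂ) (i n : Fin d) :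
    (partialInner χ *ᵥ x) (i, n) = ∑ a, star (χ (a, i)) * x (a, n) := by
  simp [partialInner, mulVec, dotProduct, Fintype.sum_prod_type, one_apply]

theorem schmidtRank_le_iff_exists_partialInner_mulVec (ψ : Fin d × Fin d → ℂ) :
    schmidtRank ψ ≤ k ↔ ∃ χ x : Fin k × Fin d → ℂ, partialInner χ *ᵥ x = ψ := by
  constructor
  · intro h
    obtain ⟨U, V, hUV⟩ := Matrix.exists_mul_eq_of_rank_le h
    refine ⟨fun p => star (U p.2 p.1), fun p => V p.1 p.2, funext fun ⟨i, n⟩ => ?_⟩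
    simpa [partialInner_mulVec_apply, Matrix.mul_apply] using congrFun (congrFun hUV i) n
  · rintro ⟨χ, x, rfl⟩
    have : (Matrix.of fun i j => (partialInner χ *ᵥ x) (i, j) : Mat d) =
        (Matrix.of (Function.curry χ))ᴴ * Matrix.of (Function.curry x) := by
      ext i j; simp [partialInner_mulVec_apply, Matrix.mul_apply]
    rw [schmidtRank, this]
    exact (rank_mul_le_left _ _).trans ((rank_le_card_width _).trans_eq (Fintype.card_fin k))

/-- The map `Λ = T ∘ S`, where `S` is the map with `ρ = (1 ⊗ S)(P₊)`. -/
def transposedChoiMap (ρ : Mat2 d) : Mat d →ₗ[ℂ] Mat d where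
  toFun X := (Matrix.of fun k l => (d : ℂ) * ∑ i, ∑ j, X i j * ρ (i, k) (j, l))ᵀ
  map_add' X Y := by ext; simp [add_mul, Finset.sum_add_distrib, mul_add]
  map_smul' c X := by ext; simp [Finset.mul_sum, mul_assoc, mul_left_comm]

theorem idTensorK_transposedChoiMap_vecMulVec (ρ : Mat2 d) (χ : Fin k × Fin d → ℂ) :
    idTensorK k (transposedChoiMap ρ) (vecMulVec χ (star χ)) =
      (d : ℂ) • ((partialInner χ)ᴴ * ptB ρ * partialInner χ) := by
  ext p q
  simp only [idTensorK, transposedChoiMap, LinearMap.coe_mk, AddHom.coe_mk, of_apply,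
    transpose_apply, vecMulVec_apply, Pi.star_apply, RCLike.star_def, partialInner, ptB,
    Matrix.smul_apply, Matrix.mul_apply, conjTranspose_apply, kroneckerMap_apply,
    Function.curry_apply, one_apply, apply_ite, mul_one, mul_zero, RingHomCompTriple.comp_apply,
    RingHom.id_apply, star_zero, ite_mul, zero_mul, Fintype.sum_prod_type, Finset.sum_ite_eq',
    Finset.mem_univ, ↓reduceIte, Finset.mul_sum, Finset.sum_mul, smul_eq_mul]
  rw [Finset.sum_comm]
  exact Finset.sum_congr rfl fun _ _ => Finset.sum_congr rfl fun _ _ => by ring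

theorem star_dotProduct_idTensorK_vecMulVec (ρ : Mat2 d) (χ x : Fin k × Fin d → ℂ) :
    star x ⬝ᵥ idTensorK k (transposedChoiMap ρ) (vecMulVec χ (star χ)) *ᵥ x =
      d * (star (partialInner χ *ᵥ x) ⬝ᵥ ptB ρ *ᵥ (partialInner χ *ᵥ x)) := by
  rw [idTensorK_transposedChoiMap_vecMulVec, smul_mulVec, dotProduct_smul, smul_eq_mul,
    ← mulVec_mulVec, ← mulVec_mulVec, dotProduct_mulVec, star_mulVec]

theorem isHermitian_idTensorK_transposedChoiMap {ρ : Mat2 d} (hρ : ρ.IsHermitian)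
    {M : Matrix (Fin k × Fin d) (Fin k × Fin d) ℂ} (hM : M.IsHermitian) :
    (idTensorK k (transposedChoiMap ρ) M).IsHermitian := by
  ext p q
  simp only [conjTranspose_apply, idTensorK, transposedChoiMap, LinearMap.coe_mk, AddHom.coe_mk,
    Matrix.of_apply, transpose_apply, star_mul', star_sum, star_natCast, hρ.apply, hM.apply]
  rw [Finset.sum_comm]

theorem idTensorK_sum {F : Type*} [FunLike F (Mat d) (Mat d)]
    [AddMonoidHomClass F (Mat d) (Mat d)] (Λ : F) {ι : Type*} (s : Finset ι)
    (M : ι → Matrix (Fin k × Fin d) (Fin k × Fin d) ℂ) :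
    idTensorK k Λ (∑ r ∈ s, M r) = ∑ r ∈ s, idTensorK k Λ (M r) := by
  ext p q
  have hblock : (Matrix.of fun m n => ∑ r ∈ s, M r (p.1, m) (q.1, n)) =
      ∑ r ∈ s, Matrix.of fun m n => M r (p.1, m) (q.1, n) := by
    ext; simp [Matrix.sum_apply]
  simp only [idTensorK, Matrix.of_apply, Matrix.sum_apply]
  rw [hblock, map_sum, Matrix.sum_apply]

theorem forall_posSemidef_idTensorK_iff {ρ : Mat2 d} (hρ : ρ.IsHermitian) (hd : 0 < d) :
    (∀ M : Matrix (Fin k × Fin d) (Fin k × Fin d) ℂ, M.PosSemidef →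
        (idTensorK k (transposedChoiMap ρ) M).PosSemidef) ↔
      ∀ ψ : Fin d × Fin d → ℂ, schmidtRank ψ ≤ k → 0 ≤ (star ψ ⬝ᵥ ptB ρ *ᵥ ψ).re := by
  constructor
  · intro hpos ψ hψ
    obtain ⟨χ, x, rfl⟩ := (schmidtRank_le_iff_exists_partialInner_mulVec ψ).mp hψ
    have h := (hpos _ (posSemidef_vecMulVec_self_star χ)).dotProduct_mulVec_nonneg x
    rw [star_dotProduct_idTensorK_vecMulVec, Complex.nonneg_iff, ← Complex.ofReal_natCast,
      Complex.re_ofReal_mul] at h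
    exact nonneg_of_mul_nonneg_right h.1 (by exact_mod_cast hd)
  · intro hψ M hM
    obtain ⟨r, χ, rfl⟩ := posSemidef_iff_eq_sum_vecMulVec.mp hM
    have hN := isHermitian_idTensorK_transposedChoiMap hρ hM.isHermitian
    refine .of_dotProduct_mulVec_nonneg hN fun x => Complex.nonneg_iff.mpr
      ⟨?_, (hN.im_star_dotProduct_mulVec_self x).symm⟩
    rw [idTensorK_sum, sum_mulVec, dotProduct_sum, Complex.re_sum]
    refine Finset.sum_nonneg fun i _ => ?_
    rw [star_dotProduct_idTensorK_vecMulVec, ← Complex.ofReal_natCast, Complex.re_ofReal_mul]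
    exact mul_nonneg d.cast_nonneg <|
      hψ _ <| (schmidtRank_le_iff_exists_partialInner_mulVec _).mpr ⟨_, _, rfl⟩

end

/-- DiVincenzo et al.: `ρ` is one-distillable iff the map
`Λ = T ∘ S` (with `ρ = (1⊗S)(P₊)`) is not two-positive. -/
theorem oneDistillable_iff_not_twoPositive (d : ℕ) (hd : 2 ≤ d)
    (ρ : Mat2 d) (hρ : IsState ρ) (S : Mat d → Mat d)
    (hS : S = fun X => Matrix.of fun k l =>
      (d : ℂ) * ∑ i, ∑ j, X i j * ρ (i, k) (j, l)) :
    OneDistillable ρ ↔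
      ∃ M : Matrix (Fin 2 × Fin d) (Fin 2 × Fin d) ℂ, M.PosSemidef ∧
        ¬ (idTensorK 2 (fun X => (S X)ᵀ) M).PosSemidef := by
  subst hS
  rw [OneDistillable, ← not_iff_not]
  push Not
  exact (forall_posSemidef_idTensorK_iff hρ.1.isHermitian (by omega)).symm
end
end

section
/- Invariance under local filtering: let ρ be a one-undistillable state on ℂ^d ⊗ ℂ^d and let A be any d×d complex matrix. Then the filtered operator σ = (A⊗I)·ρ·(A†⊗I) also satisfies the one-undistillability condition: Re⟨ψ, σ^{T_B} ψ⟩ ≥ 0 for every vector ψ of Schmidt rank at most 2. -/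
open Matrix Kronecker BigOperators
open scoped ComplexOrder

noncomputable section

lemma ptB_localA {d : ℕ} (ρ : Mat2 d) (A B : Mat d) :
    ptB ((A ⊗ₖ (1 : Mat d)) * ρ * (B ⊗ₖ (1 : Mat d)))
      = (A ⊗ₖ (1 : Mat d)) * ptB ρ * (B ⊗ₖ (1 : Mat d)) := by
  ext ⟨i, k⟩ ⟨j, l⟩
  simp only [ptB, Matrix.of_apply, Matrix.mul_apply, Matrix.kroneckerMap_apply,
    Matrix.one_apply, Fintype.sum_prod_type]
  simp [Finset.mul_sum, Finset.sum_mul, mul_ite, ite_mul, mul_comm, mul_assoc, mul_left_comm]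

/-- one-undistillability is invariant under local filtering
`ρ ↦ (A⊗I)·ρ·(A†⊗I)` by Alice. -/
theorem filtering_invariance (d : ℕ) (hd : 2 ≤ d) (ρ : Mat2 d)
    (hρ : IsState ρ) (hund : ¬ OneDistillable ρ) (A : Mat d) :
    ∀ ψ : Fin d × Fin d → ℂ, schmidtRank ψ ≤ 2 →
      0 ≤ (star ψ ⬝ᵥ
        (ptB ((A ⊗ₖ (1 : Mat d)) * ρ * (Aᴴ ⊗ₖ (1 : Mat d)))).mulVec ψ).re := by
  intro ψ hψ
  simp only [OneDistillable, not_exists] at hund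
  set φ : Fin d × Fin d → ℂ := (Aᴴ ⊗ₖ (1 : Mat d)) *ᵥ ψ with hφ
  have hrank : schmidtRank φ ≤ 2 := by
    have hmat : (Matrix.of fun i j => φ (i, j) : Mat d)
        = Aᴴ * (Matrix.of fun i j => ψ (i, j) : Mat d) := by
      ext a b
      simp only [hφ, Matrix.of_apply, Matrix.mulVec, dotProduct,
        Matrix.kroneckerMap_apply, Matrix.one_apply, Fintype.sum_prod_type,
        Matrix.mul_apply]
      simp [mul_ite]
    have := hund φ
    unfold schmidtRank
    rw [hmat]
    exact le_trans (Matrix.rank_mul_le_right _ _) hψ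
  have key : star ψ ⬝ᵥ (ptB ((A ⊗ₖ (1 : Mat d)) * ρ * (Aᴴ ⊗ₖ (1 : Mat d)))) *ᵥ ψ
      = star φ ⬝ᵥ (ptB ρ) *ᵥ φ := by
    rw [ptB_localA]
    rw [← Matrix.mulVec_mulVec, ← Matrix.mulVec_mulVec]
    rw [Matrix.dotProduct_mulVec (star ψ) (A ⊗ₖ (1 : Mat d))]
    have hs : star ψ ᵥ* (A ⊗ₖ (1 : Mat d)) = star φ := by
      ext ⟨a, m⟩
      simp only [hφ, Matrix.vecMul, Matrix.mulVec, dotProduct, Pi.star_apply,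
        Matrix.kroneckerMap_apply, Matrix.one_apply, Fintype.sum_prod_type,
        Matrix.conjTranspose_apply, star_sum, star_mul', starRingEnd_apply,
        star_star, mul_ite, ite_mul, mul_zero, zero_mul, mul_one]
      simp [apply_ite (starRingEnd ℂ), Finset.sum_ite_eq, _root_.map_mul, mul_comm]
    rw [hs]
  rw [key]
  have h := hund φ
  simp only [not_and, not_lt] at h
  exact h hrank
end
end

section
/- Collective application of the reduction criterion on two pairs: let ρ₁, ρ₂ be states on ℂ^d ⊗ ℂ^d and suppose there are vectors ψ₁, ψ₂ : Fin d × Fin d → ℂ with Re⟨ψ_m, ((ρ_m)_A⊗I − ρ_m)·ψ_m⟩ < 0 for m = 1, 2 (violations of the reduction criterion on each copy). Then the product vector Ψ = ψ₁⊗ψ₂, with Ψ(x,y) = ψ₁(x)·ψ₂(y), satisfies Re⟨Ψ, [ ((ρ₁)_A⊗I) ⊗ ((ρ₂)_A⊗I) − ρ₁⊗ρ₂ ]·Ψ⟩ < 0; i.e. violation of the reduction criterion on single copies yields a violation of the two-copy reduction criterion on a product vector. -/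
open Matrix Kronecker BigOperators
open scoped ComplexOrder

noncomputable section

/-!
With `a = ⟨ψ, (ρ_A ⊗ I) ψ⟩` and `b = ⟨ψ, ρ ψ⟩`, both are nonnegative reals, since `ρ_A` is a sum
of compressions of `ρ` and hence positive semidefinite; a violation of the reduction criterion says
`a < b`. On a product vector the two-copy expectation factors as `a₁ a₂ - b₁ b₂`, which is
negative because `0 ≤ aₘ < bₘ`.
-/

section KroneckerForms

variable {R : Type*} [CommSemiring R] {n m : Type*} [Fintype n] [Fintype m]

lemma kroneckerMap_mulVec_prod (M : Matrix n n R) (N : Matrix m m R) (φ : n → R) (χ : m → R) :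
    (M ⊗ₖ N) *ᵥ (fun xy : n × m => φ xy.1 * χ xy.2) =
      fun xy => (M *ᵥ φ) xy.1 * (N *ᵥ χ) xy.2 := by
  ext ⟨x, y⟩
  simp only [mulVec, dotProduct, kroneckerMap_apply, Fintype.sum_prod_type, Finset.sum_mul_sum]
  exact Finset.sum_congr rfl fun _ _ => Finset.sum_congr rfl fun _ _ => by ring

lemma dotProduct_prod (a c : n → R) (b e : m → R) :
    (fun xy : n × m => a xy.1 * b xy.2) ⬝ᵥ (fun xy => c xy.1 * e xy.2) =
      (a ⬝ᵥ c) * (b ⬝ᵥ e) := by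
  simp only [dotProduct, Fintype.sum_prod_type, Finset.sum_mul_sum]
  exact Finset.sum_congr rfl fun _ _ => Finset.sum_congr rfl fun _ _ => by ring

lemma star_dotProduct_kronecker_mulVec_prod [StarRing R] (M : Matrix n n R) (N : Matrix m m R)
    (φ : n → R) (χ : m → R) :
    star (fun xy : n × m => φ xy.1 * χ xy.2) ⬝ᵥ
        (M ⊗ₖ N) *ᵥ (fun xy : n × m => φ xy.1 * χ xy.2) =
      (star φ ⬝ᵥ M *ᵥ φ) * (star χ ⬝ᵥ N *ᵥ χ) := by
  have : star (fun xy : n × m => φ xy.1 * χ xy.2) = fun xy => star φ xy.1 * star χ xy.2 := by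
    ext; simp [star_mul']
  rw [this, kroneckerMap_mulVec_prod, dotProduct_prod]

end KroneckerForms

lemma Matrix.PosSemidef.redA {d : ℕ} {ρ : Mat2 d} (hρ : ρ.PosSemidef) :
    (_root_.redA ρ).PosSemidef := by
  have : _root_.redA ρ = ∑ k, ρ.submatrix (·, k) (·, k) := by
    ext i j; simp [_root_.redA, Matrix.sum_apply]
  rw [this]
  exact posSemidef_sum _ fun k _ => hρ.submatrix _

lemma Matrix.PosSemidef.redA_kronecker_one {d : ℕ} {ρ : Mat2 d} (hρ : ρ.PosSemidef) :
    (_root_.redA ρ ⊗ₖ (1 : Mat d)).PosSemidef :=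
  hρ.redA.kronecker PosSemidef.one

lemma Complex.lt_of_re_sub_neg {a b : ℂ} (ha : 0 ≤ a) (hb : 0 ≤ b) (h : (a - b).re < 0) :
    a < b := by
  rw [Complex.le_def] at ha hb
  rw [Complex.sub_re] at h
  exact Complex.lt_def.mpr ⟨by linarith, by simp [← ha.2, ← hb.2]⟩

lemma Complex.re_sub_neg_of_lt {a b : ℂ} (h : a < b) : (a - b).re < 0 :=
  (Complex.lt_def.mp (sub_neg.mpr h)).1

lemma star_dotProduct_mulVec_lt_of_reduction_violation {d : ℕ} {ρ : Mat2 d} (hρ : ρ.PosSemidef)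
    {ψ : Fin d × Fin d → ℂ}
    (hv : (star ψ ⬝ᵥ (redA ρ ⊗ₖ (1 : Mat d) - ρ) *ᵥ ψ).re < 0) :
    star ψ ⬝ᵥ (redA ρ ⊗ₖ (1 : Mat d)) *ᵥ ψ < star ψ ⬝ᵥ ρ *ᵥ ψ := by
  rw [sub_mulVec, dotProduct_sub] at hv
  exact Complex.lt_of_re_sub_neg
    (hρ.redA_kronecker_one.dotProduct_mulVec_nonneg ψ)
    (hρ.dotProduct_mulVec_nonneg ψ) hv

theorem reduction_violation_two_copies_general (d : ℕ) (ρ₁ ρ₂ : Mat2 d)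
    (h₁ : IsState ρ₁) (h₂ : IsState ρ₂)
    (ψ₁ ψ₂ : Fin d × Fin d → ℂ)
    (hv₁ : (star ψ₁ ⬝ᵥ (redA ρ₁ ⊗ₖ (1 : Mat d) - ρ₁).mulVec ψ₁).re < 0)
    (hv₂ : (star ψ₂ ⬝ᵥ (redA ρ₂ ⊗ₖ (1 : Mat d) - ρ₂).mulVec ψ₂).re < 0) :
    (star (fun xy : (Fin d × Fin d) × (Fin d × Fin d) => ψ₁ xy.1 * ψ₂ xy.2) ⬝ᵥ
        ((redA ρ₁ ⊗ₖ (1 : Mat d)) ⊗ₖ (redA ρ₂ ⊗ₖ (1 : Mat d)) - ρ₁ ⊗ₖ ρ₂).mulVec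
          (fun xy : (Fin d × Fin d) × (Fin d × Fin d) => ψ₁ xy.1 * ψ₂ xy.2)).re
      < 0 := by
  rw [sub_mulVec, dotProduct_sub, star_dotProduct_kronecker_mulVec_prod,
    star_dotProduct_kronecker_mulVec_prod]
  exact Complex.re_sub_neg_of_lt <| mul_lt_mul''
    (star_dotProduct_mulVec_lt_of_reduction_violation h₁.1 hv₁)
    (star_dotProduct_mulVec_lt_of_reduction_violation h₂.1 hv₂)
    (h₁.1.redA_kronecker_one.dotProduct_mulVec_nonneg ψ₁)
    (h₂.1.redA_kronecker_one.dotProduct_mulVec_nonneg ψ₂)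

/-- single-copy violations of the reduction criterion combine to a
two-copy violation on the product vector. -/
theorem reduction_violation_two_copies (d : ℕ) (hd : 2 ≤ d) (ρ₁ ρ₂ : Mat2 d)
    (h₁ : IsState ρ₁) (h₂ : IsState ρ₂)
    (ψ₁ ψ₂ : Fin d × Fin d → ℂ)
    (hv₁ : (star ψ₁ ⬝ᵥ (redA ρ₁ ⊗ₖ (1 : Mat d) - ρ₁).mulVec ψ₁).re < 0)
    (hv₂ : (star ψ₂ ⬝ᵥ (redA ρ₂ ⊗ₖ (1 : Mat d) - ρ₂).mulVec ψ₂).re < 0) :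
    (star (fun xy : (Fin d × Fin d) × (Fin d × Fin d) => ψ₁ xy.1 * ψ₂ xy.2) ⬝ᵥ
        ((redA ρ₁ ⊗ₖ (1 : Mat d)) ⊗ₖ (redA ρ₂ ⊗ₖ (1 : Mat d)) - ρ₁ ⊗ₖ ρ₂).mulVec
          (fun xy : (Fin d × Fin d) × (Fin d × Fin d) => ψ₁ xy.1 * ψ₂ xy.2)).re
      < 0 :=
  reduction_violation_two_copies_general d ρ₁ ρ₂ h₁ h₂ ψ₁ ψ₂ hv₁ hv₂
end
end
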